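/- arXiv:2106.08360 — 2 statements merged into one kernel-verified Lean document; each statement's English description precedes it below -/
import Mathlib

section
/- Let p ≥ 1 and let W ∈ ℝ^p have all entries positive, with N = ∑_{j=1}^p W_j. Define f(z) = N log(∑_{j=1}^p exp(z_j)) − ∑_{j=1}^p W_j z_j for z ∈ ℝ^p, and let z* = clr(W/N), i.e. z*_j = log(W_j/N) − (1/p) ∑_{k=1}^p log(W_k/N). Then z* is a global minimizer of f: f(z*) ≤ f(z) for all z ∈ ℝ^p, and z* satisfies ∑_{j=1}^p z*_j = 0. -/
/-!
The objective is the cross-entropy `f z = -∑ W_j log q_j` between the weights `W` and the softmax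
`q = exp z / ∑ exp z`, so Gibbs' inequality (from `log x ≤ x - 1`) bounds it below by
`-∑ W_j log (W_j / N)`. Since `f` is invariant under adding a constant to `z`, this bound is attained
at `log (W / N)` and hence at its centred version `clr (W / N)`, whose coordinates sum to zero.
-/

noncomputable def clr {p : ℕ} (x : Fin p → ℝ) : Fin p → ℝ :=
  fun j => Real.log (x j) - (1 / (p : ℝ)) * ∑ k, Real.log (x k)

open Real Finset

theorem sum_clr {p : ℕ} (x : Fin p → ℝ) : ∑ j, clr x j = 0 := by
  rcases Nat.eq_zero_or_pos p with rfl | hp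
  · simp
  · have hp' : (p : ℝ) ≠ 0 := by positivity
    simp only [clr, sum_sub_distrib, sum_const, card_univ, Fintype.card_fin, nsmul_eq_mul]
    field_simp
    ring

section

variable {ι : Type*} [Fintype ι]

theorem sum_mul_log_le_sum_mul_log_div_sum {w q : ι → ℝ} (hw : ∀ j, 0 < w j)
    (hq : ∀ j, 0 < q j) (hq1 : ∑ j, q j ≤ 1) :
    ∑ j, w j * log (q j) ≤ ∑ j, w j * log (w j / ∑ k, w k) := by
  set N := ∑ k, w k
  have hterm : ∀ j, w j * log (q j) - w j * log (w j / N) ≤ N * q j - w j := by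
    intro j
    have hN : 0 < N := (hw j).trans_le (single_le_sum (fun k _ => (hw k).le) (mem_univ j))
    have hwN : 0 < w j / N := div_pos (hw j) hN
    calc w j * log (q j) - w j * log (w j / N) = w j * log (q j / (w j / N)) := by
          rw [log_div (hq j).ne' hwN.ne', mul_sub]
      _ ≤ w j * (q j / (w j / N) - 1) :=
          mul_le_mul_of_nonneg_left (log_le_sub_one_of_pos (div_pos (hq j) hwN)) (hw j).le
      _ = N * q j - w j := by field_simp [(hw j).ne']
  have hN : 0 ≤ N := sum_nonneg fun k _ => (hw k).le
  have hsum : ∑ j, (N * q j - w j) = N * (∑ j, q j - 1) := by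
    rw [sum_sub_distrib, ← mul_sum, mul_sub, mul_one]
  have htotal := sum_le_sum fun j (_ : j ∈ univ) => hterm j
  rw [sum_sub_distrib, hsum] at htotal
  linarith [mul_nonpos_of_nonneg_of_nonpos hN (sub_nonpos.2 hq1)]

noncomputable def negLogLik (W z : ι → ℝ) : ℝ :=
  (∑ j, W j) * log (∑ j, exp (z j)) - ∑ j, W j * z j

theorem neg_sum_mul_log_div_sum_le_negLogLik {W : ι → ℝ} (hW : ∀ j, 0 < W j) (z : ι → ℝ) :
    -∑ j, W j * log (W j / ∑ k, W k) ≤ negLogLik W z := by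
  set S := ∑ k, exp (z k)
  have hS : ∀ j, 0 < S := fun j =>
    (exp_pos (z j)).trans_le (single_le_sum (fun k _ => (exp_pos (z k)).le) (mem_univ j))
  have hsoftmax : ∑ j, exp (z j) / S ≤ 1 := by
    rw [← sum_div]
    exact div_self_le_one S
  have hgibbs := sum_mul_log_le_sum_mul_log_div_sum hW
    (fun j => div_pos (exp_pos (z j)) (hS j)) hsoftmax
  have hcross : ∑ j, W j * log (exp (z j) / S) = -negLogLik W z := by
    have hlog : ∀ j, log (exp (z j) / S) = z j - log S := fun j => by
      rw [log_div (exp_pos _).ne' (hS j).ne', log_exp]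
    simp only [hlog, mul_sub, sum_sub_distrib, ← sum_mul, negLogLik]
    ring
  linarith

theorem negLogLik_log_sub_const (W : ι → ℝ) {x : ι → ℝ} (hx : ∀ j, 0 < x j)
    (hx1 : ∑ j, x j = 1) (c : ℝ) :
    negLogLik W (fun j => log (x j) - c) = -∑ j, W j * log (x j) := by
  have hexp : ∑ j, exp (log (x j) - c) = exp (-c) := by
    simp only [exp_sub, exp_log (hx _), ← sum_div, hx1, exp_neg, one_div]
  simp only [negLogLik, hexp, log_exp, mul_sub, sum_sub_distrib, ← sum_mul]
  ring

end

theorem clr_minimizes_negLoglik (p : ℕ) (hp : 1 ≤ p) (W : Fin p → ℝ)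
    (hW : ∀ j, 0 < W j) (N : ℝ) (hN : N = ∑ j, W j)
    (f : (Fin p → ℝ) → ℝ)
    (hf : ∀ z, f z = N * Real.log (∑ j, Real.exp (z j)) - ∑ j, W j * z j)
    (zstar : Fin p → ℝ) (hzstar : zstar = clr (fun j => W j / N)) :
    (∀ z : Fin p → ℝ, f zstar ≤ f z) ∧ ∑ j, zstar j = 0 := by
  subst hN hzstar
  have hf' : f = negLogLik W := funext hf
  have hNpos : 0 < ∑ j, W j := sum_pos (fun j _ => hW j) ⟨⟨0, hp⟩, mem_univ _⟩
  have hq1 : ∑ j, W j / ∑ k, W k = 1 := by rw [← sum_div, div_self hNpos.ne']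
  refine ⟨fun z => ?_, sum_clr _⟩
  calc f (clr fun j => W j / ∑ k, W k) = -∑ j, W j * log (W j / ∑ k, W k) := by
        rw [hf']
        exact negLogLik_log_sub_const W (fun j => div_pos (hW j) hNpos) hq1 _
    _ ≤ f z := hf' ▸ neg_sum_mul_log_div_sum_le_negLogLik hW z
end

section
/- Let n, p ≥ 1 and let W be an n×p real matrix with nonnegative entries, with row sums N_i = ∑_{j=1}^p W_{ij} and total N = ∑_{i=1}^n N_i, and assume N > 0. Let L ≥ (max_{1≤i≤n} N_i)/N. Then for all Z, Y ∈ ℝ^{n×p}, the second-order approximation error is nonpositive: L_N(Z; W) − L_N(Y; W) − ∑_{i,j} (Z_{ij} − Y_{ij}) G_{ij}(Y) − (L/2) ∑_{i,j} (Z_{ij} − Y_{ij})² ≤ 0, where G_{ij}(Y) = (N_i/N) softmax(Y_i)_j − W_{ij}/N is the gradient of L_N(·; W) at Y. -/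
noncomputable def softmax {p : ℕ} (z : Fin p → ℝ) : Fin p → ℝ :=
  fun j => Real.exp (z j) / ∑ k, Real.exp (z k)

noncomputable def negLoglik {n p : ℕ} (N : ℝ) (W Z : Fin n → Fin p → ℝ) : ℝ :=
  (1 / N) * ∑ i, ((∑ j, W i j) * Real.log (∑ j, Real.exp (Z i j))
    - ∑ j, W i j * Z i j)

/-!
The remainder of log-sum-exp at `y` in direction `d = z - y` is the centred cumulant
generating function `log E[exp (d - E d)]` of `d` under the distribution `softmax y`.
Since every `|d j|` is at most `‖d‖₂`, Hoeffding's lemma bounds it by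
`(2 ‖d‖₂)² / 8 = ‖d‖₂² / 2`. The remainder of the negative log-likelihood is the sum of
these row remainders with weights `N_i / N ≤ L`.
-/

open Finset Real MeasureTheory ProbabilityTheory

theorem log_sum_mul_exp_sub_sum_mul_le {ι : Type*} [Fintype ι] (w x : ι → ℝ)
    (hw : ∀ j, 0 ≤ w j) (hw_sum : ∑ j, w j = 1) {a b : ℝ}
    (hx : ∀ j, x j ∈ Set.Icc a b) :
    log (∑ j, w j * exp (x j)) - ∑ j, w j * x j ≤ (b - a) ^ 2 / 8 := by
  let _ : MeasurableSpace ι := ⊤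
  have : DiscreteMeasurableSpace ι := ⟨fun _ ↦ trivial⟩
  let P : PMF ι := PMF.ofFintype (fun j ↦ ENNReal.ofReal (w j)) <| by
    rw [← ENNReal.ofReal_sum_of_nonneg fun j _ ↦ hw j, hw_sum, ENNReal.ofReal_one]
  have hP : ∀ j, (P j).toReal = w j := fun j ↦ ENNReal.toReal_ofReal (hw j)
  have hoeffding := (hasSubgaussianMGF_of_mem_Icc (μ := P.toMeasure) (X := x)
    Measurable.of_discrete.aemeasurable (ae_of_all _ hx)).mgf_le 1
  simp only [mgf, PMF.integral_eq_sum, hP, smul_eq_mul, one_mul, exp_sub, one_pow, mul_one]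
    at hoeffding
  have hc : (((‖b - a‖₊ / 2) ^ 2 : NNReal) : ℝ) / 2 = (b - a) ^ 2 / 8 := by
    push_cast
    rw [Real.norm_eq_abs, div_pow, sq_abs]
    ring
  have hpos : 0 < ∑ j, w j * exp (x j) := by
    calc 0 < exp a := exp_pos a
      _ = ∑ j, w j * exp a := by rw [← sum_mul, hw_sum, one_mul]
      _ ≤ ∑ j, w j * exp (x j) :=
        sum_le_sum fun j _ ↦ mul_le_mul_of_nonneg_left (exp_le_exp.2 (hx j).1) (hw j)
  simp only [mul_div_assoc', ← sum_div, hc, div_le_iff₀ (exp_pos _), ← exp_add] at hoeffding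
  rw [sub_le_iff_le_add, log_le_iff_le_exp hpos]
  exact hoeffding

theorem softmax_nonneg {p : ℕ} (z : Fin p → ℝ) (j : Fin p) : 0 ≤ softmax z j := by
  unfold softmax; positivity

theorem sum_exp_pos {p : ℕ} [NeZero p] (z : Fin p → ℝ) : 0 < ∑ j, exp (z j) :=
  sum_pos (fun j _ ↦ exp_pos (z j)) univ_nonempty

theorem sum_softmax {p : ℕ} [NeZero p] (z : Fin p → ℝ) : ∑ j, softmax z j = 1 := by
  simp only [softmax]
  rw [← sum_div, div_self (sum_exp_pos z).ne']

theorem log_sum_exp_sub_log_sum_exp {p : ℕ} [NeZero p] (y z : Fin p → ℝ) :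
    log (∑ j, exp (z j)) - log (∑ j, exp (y j))
      = log (∑ j, softmax y j * exp (z j - y j)) := by
  have h (j : Fin p) : softmax y j * exp (z j - y j) = exp (z j) / ∑ k, exp (y k) := by
    rw [softmax, exp_sub]; field_simp
  simp only [h, ← sum_div]
  rw [log_div (sum_exp_pos z).ne' (sum_exp_pos y).ne']

theorem log_sum_exp_sub_sub_le {p : ℕ} [NeZero p] (y z : Fin p → ℝ) :
    log (∑ j, exp (z j)) - log (∑ j, exp (y j)) - ∑ j, (z j - y j) * softmax y j
      ≤ (1 / 2) * ∑ j, (z j - y j) ^ 2 := by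
  set r := √(∑ j, (z j - y j) ^ 2)
  have hbound (j : Fin p) : z j - y j ∈ Set.Icc (-r) r :=
    abs_le.mp <| abs_le_sqrt <|
      single_le_sum (f := fun k ↦ (z k - y k) ^ 2) (fun k _ ↦ sq_nonneg _) (mem_univ j)
  have hr : (r - -r) ^ 2 / 8 = (1 / 2) * ∑ j, (z j - y j) ^ 2 := by
    rw [sub_neg_eq_add, ← two_mul, mul_pow, sq_sqrt (sum_nonneg fun j _ ↦ sq_nonneg _)]
    ring
  simp only [log_sum_exp_sub_log_sum_exp, mul_comm (z _ - y _), ← hr]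
  exact log_sum_mul_exp_sub_sum_mul_le _ _ (softmax_nonneg y) (sum_softmax y) hbound

theorem negLoglik_sub_sub_inner_eq {n p : ℕ} (N : ℝ) (W Z Y : Fin n → Fin p → ℝ) :
    negLoglik N W Z - negLoglik N W Y
      - ∑ i, ∑ j, (Z i j - Y i j) * ((∑ j', W i j') / N * softmax (Y i) j - W i j / N)
      = ∑ i, (∑ j, W i j) / N * (log (∑ j, exp (Z i j)) - log (∑ j, exp (Y i j))
          - ∑ j, (Z i j - Y i j) * softmax (Y i) j) := by
  have inner (i : Fin n) :
      ∑ j, (Z i j - Y i j) * ((∑ j', W i j') / N * softmax (Y i) j - W i j / N) =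
        (∑ j, W i j) / N * ∑ j, (Z i j - Y i j) * softmax (Y i) j
        - (1 / N) * (∑ j, W i j * Z i j - ∑ j, W i j * Y i j) := by
    simp only [mul_sum, ← sum_sub_distrib]
    exact sum_congr rfl fun j _ ↦ by ring
  simp only [negLoglik, inner]
  rw [mul_sum, mul_sum, ← sum_sub_distrib, ← sum_sub_distrib]
  exact sum_congr rfl fun i _ ↦ by ring

theorem descent_lemma_general (n p : ℕ) (hn : 1 ≤ n) (hp : 1 ≤ p)
    (W : Fin n → Fin p → ℝ) (hW : ∀ i j, 0 ≤ W i j)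
    (N : ℝ) (hNpos : 0 < N)
    (L : ℝ)
    (hL : (Finset.univ.sup' (Finset.univ_nonempty_iff.mpr ⟨⟨0, hn⟩⟩)
      fun i : Fin n => ∑ j, W i j) / N ≤ L)
    (Z Y : Fin n → Fin p → ℝ) :
    negLoglik N W Z - negLoglik N W Y
      - (∑ i, ∑ j, (Z i j - Y i j) *
          (((∑ j', W i j') / N) * softmax (Y i) j - W i j / N))
      - (L / 2) * ∑ i, ∑ j, (Z i j - Y i j) ^ 2 ≤ 0 := by
  have : NeZero p := ⟨by omega⟩
  rw [negLoglik_sub_sub_inner_eq, mul_sum, ← sum_sub_distrib]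
  refine sum_nonpos fun i _ ↦ sub_nonpos.2 ?_
  have hrow : (∑ j, W i j) / N ≤ L :=
    (div_le_div_of_nonneg_right (le_sup' (fun i ↦ ∑ j, W i j) (mem_univ i)) hNpos.le).trans hL
  calc (∑ j, W i j) / N * (log (∑ j, exp (Z i j)) - log (∑ j, exp (Y i j))
          - ∑ j, (Z i j - Y i j) * softmax (Y i) j)
      ≤ (∑ j, W i j) / N * ((1 / 2) * ∑ j, (Z i j - Y i j) ^ 2) :=
        mul_le_mul_of_nonneg_left (log_sum_exp_sub_sub_le (Y i) (Z i))
          (div_nonneg (sum_nonneg fun j _ ↦ hW i j) hNpos.le)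
    _ ≤ L * ((1 / 2) * ∑ j, (Z i j - Y i j) ^ 2) :=
        mul_le_mul_of_nonneg_right hrow (by positivity)
    _ = L / 2 * ∑ j, (Z i j - Y i j) ^ 2 := by ring

theorem descent_lemma (n p : ℕ) (hn : 1 ≤ n) (hp : 1 ≤ p)
    (W : Fin n → Fin p → ℝ) (hW : ∀ i j, 0 ≤ W i j)
    (N : ℝ) (hN : N = ∑ i, ∑ j, W i j) (hNpos : 0 < N)
    (L : ℝ)
    (hL : (Finset.univ.sup' (Finset.univ_nonempty_iff.mpr ⟨⟨0, hn⟩⟩)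
      fun i : Fin n => ∑ j, W i j) / N ≤ L)
    (Z Y : Fin n → Fin p → ℝ) :
    negLoglik N W Z - negLoglik N W Y
      - (∑ i, ∑ j, (Z i j - Y i j) *
          (((∑ j', W i j') / N) * softmax (Y i) j - W i j / N))
      - (L / 2) * ∑ i, ∑ j, (Z i j - Y i j) ^ 2 ≤ 0 :=
  descent_lemma_general n p hn hp W hW N hNpos L hL Z Y
end
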